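/- arXiv:2502.21155 — 3 statements merged into one kernel-verified Lean document; each statement's English description precedes it below -/
import Mathlib

section
/- Let g₁,…,g_m ∈ ℤⁿ and let C := {Σᵢ cᵢ gᵢ : cᵢ ∈ ℚ, cᵢ ≥ 0} ⊆ ℚⁿ be the rational polyhedral cone they generate. Assume C is pointed, i.e., C ∩ (−C) = {0}. Let v ∈ C ∩ ℤⁿ with v ≠ 0. Then the set A := {Σᵢ₌₁ᵏ aᵢ : k ≥ 1, a₁,…,a_k ∈ ℚ with aᵢ > 0, S₁,…,S_k ∈ C ∩ ℤⁿ with Sᵢ ≠ 0, and Σᵢ aᵢ Sᵢ = v} ⊆ ℚ is nonempty and bounded above, and its supremum is attained, i.e., A has a greatest element. -/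
/-!
Write a nonzero lattice point `S = ∑ cᵢ gᵢ` of the cone as `∑ ⌊cᵢ⌋ gᵢ` plus a lattice point of the
parallelepiped `{∑ tᵢ gᵢ : 0 ≤ tᵢ ≤ 1}`: so `S` is a sum of elements of the finite set `H` of
nonzero lattice points of that parallelepiped. Refining each `Sᵢ` of a decomposition
`∑ aᵢ Sᵢ = v` in this way only increases `∑ aᵢ`, so the supremum of `A` is the optimum of the
linear program: maximise `∑ b_h` over `b ≥ 0` with `∑ b_h h = v`. Pointedness says the vectors of
`H` have no nonzero nonnegative relation, so every feasible `b` can be moved, without lowering the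
objective, to one with linearly independent support, and there are finitely many of those.
-/

open Finset Function

section LinearIndepOn

variable {R M ι : Type*} [Ring R] [AddCommGroup M] [Module R M] [Fintype ι] {x : ι → M}

theorem linearIndepOn_iff_of_fintype {s : Set ι} :
    LinearIndepOn R x s ↔ ∀ d : ι → R, support d ⊆ s → ∑ i, d i • x i = 0 → d = 0 := by
  have hlc (l : ι →₀ R) : Finsupp.linearCombination R x l = ∑ i, l i • x i := by
    rw [Finsupp.linearCombination_apply, Finsupp.sum_fintype _ _ (by simp)]
  simp only [linearIndepOn_iff, Finsupp.mem_supported, hlc, ← Finsupp.fun_support_eq]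
  refine ⟨fun h d hd hsum => ?_, fun h l hl hsum => DFunLike.coe_injective (h l hl hsum)⟩
  simpa using congrArg DFunLike.coe (h (Finsupp.equivFunOnFinite.symm d) (by simpa) (by simpa))

end LinearIndepOn

section LinearProgram

variable {K E ι : Type*} [Field K] [LinearOrder K] [AddCommGroup E] [Module K E] [Fintype ι]
  {x : ι → E} {v : E}

variable (K) in
def nonnegCoeffs (x : ι → E) (v : E) : Set (ι → K) := {b | 0 ≤ b ∧ ∑ i, b i • x i = v}

theorem finite_nonnegCoeffs_linearIndepOn_support :
    {b ∈ nonnegCoeffs K x v | LinearIndepOn K x (support b)}.Finite := by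
  refine (Set.toFinite (support '' _)).of_finite_image fun b₁ hb₁ b₂ hb₂ hsupp => ?_
  have hsub : support (b₁ - b₂) ⊆ support b₁ :=
    (support_sub _ _).trans (Set.union_subset le_rfl (hsupp ▸ le_rfl))
  have hrel : ∑ i, (b₁ - b₂) i • x i = 0 := by
    simp [sub_smul, Finset.sum_sub_distrib, hb₁.1.2, hb₂.1.2]
  exact sub_eq_zero.mp (linearIndepOn_iff_of_fintype.mp hb₁.2 _ hsub hrel)

variable [IsStrictOrderedRing K]

theorem exists_nonneg_add_smul_eq_zero {b d : ι → K} (hb : 0 ≤ b) (hd : ∃ j, d j < 0) :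
    ∃ t : K, 0 ≤ t ∧ 0 ≤ b + t • d ∧ ∃ j, d j < 0 ∧ (b + t • d) j = 0 := by
  obtain ⟨j, hj, hmin⟩ := Set.exists_min_image {i | d i < 0} (fun i => b i / -d i)
    (Set.toFinite _) hd
  have hj' : 0 < -d j := neg_pos.mpr hj
  refine ⟨b j / -d j, div_nonneg (hb j) hj'.le, fun i => ?_, j, hj, ?_⟩
  · simp only [Pi.zero_apply, Pi.add_apply, Pi.smul_apply, smul_eq_mul]
    rcases lt_or_ge (d i) 0 with hi | hi
    · linarith [(le_div_iff₀ (neg_pos.mpr hi)).mp (hmin i hi)]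
    · exact add_nonneg (hb i) (mul_nonneg (div_nonneg (hb j) hj'.le) hi)
  · simp only [Pi.add_apply, Pi.smul_apply, smul_eq_mul]
    field_simp [hj.ne]
    ring

theorem exists_mem_nonnegCoeffs_support_ssubset
    (hx : ∀ d : ι → K, 0 ≤ d → ∑ i, d i • x i = 0 → d = 0) (c : ι → K) {b : ι → K}
    (hb : b ∈ nonnegCoeffs K x v) (hdep : ¬ LinearIndepOn K x (support b)) :
    ∃ b' ∈ nonnegCoeffs K x v, support b' ⊂ support b ∧ c ⬝ᵥ b ≤ c ⬝ᵥ b' := by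
  obtain ⟨d, hd0, hdb, hdx, hcd⟩ : ∃ d : ι → K, d ≠ 0 ∧ support d ⊆ support b ∧
      ∑ i, d i • x i = 0 ∧ 0 ≤ c ⬝ᵥ d := by
    simp only [linearIndepOn_iff_of_fintype, not_forall] at hdep
    obtain ⟨d, hdb, hdx, hd0⟩ := hdep
    rcases le_total 0 (c ⬝ᵥ d) with hcd | hcd
    · exact ⟨d, hd0, hdb, hdx, hcd⟩
    · refine ⟨-d, neg_ne_zero.mpr hd0, by rwa [support_neg], ?_, by simpa using hcd⟩
      simp [neg_smul, hdx]
  have hneg : ∃ j, d j < 0 := by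
    by_contra! h
    exact hd0 (hx d h hdx)
  obtain ⟨t, ht, hnonneg, j, hj, hbj⟩ := exists_nonneg_add_smul_eq_zero hb.1 hneg
  refine ⟨b + t • d, ⟨hnonneg, ?_⟩, ?_, ?_⟩
  · simp [add_smul, Finset.sum_add_distrib, mul_smul, ← Finset.smul_sum, hdx, hb.2]
  · refine (Set.ssubset_iff_of_subset ?_).mpr ⟨j, hdb hj.ne, by simpa using hbj⟩
    exact (support_add _ _).trans
      (Set.union_subset le_rfl ((support_smul_subset_right _ _).trans hdb))
  · simpa [dotProduct_add, dotProduct_smul] using mul_nonneg ht hcd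

theorem exists_mem_nonnegCoeffs_linearIndepOn_support
    (hx : ∀ d : ι → K, 0 ≤ d → ∑ i, d i • x i = 0 → d = 0) (c : ι → K) {b : ι → K}
    (hb : b ∈ nonnegCoeffs K x v) :
    ∃ b' ∈ nonnegCoeffs K x v, LinearIndepOn K x (support b') ∧ c ⬝ᵥ b ≤ c ⬝ᵥ b' := by
  induction hN : (support b).ncard using Nat.strong_induction_on generalizing b with
  | _ N ih =>
    by_cases hind : LinearIndepOn K x (support b)
    · exact ⟨b, hb, hind, le_rfl⟩
    obtain ⟨b', hb', hsub, hcb⟩ := exists_mem_nonnegCoeffs_support_ssubset hx c hb hind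
    obtain ⟨b'', hb'', hind'', hcb'⟩ :=
      ih _ (hN ▸ Set.ncard_lt_ncard hsub (Set.toFinite _)) hb' rfl
    exact ⟨b'', hb'', hind'', hcb.trans hcb'⟩

theorem exists_isMaxOn_nonnegCoeffs (hx : ∀ d : ι → K, 0 ≤ d → ∑ i, d i • x i = 0 → d = 0)
    (c : ι → K) (hne : (nonnegCoeffs K x v).Nonempty) :
    ∃ b ∈ nonnegCoeffs K x v, IsMaxOn (c ⬝ᵥ ·) (nonnegCoeffs K x v) b := by
  obtain ⟨b₀, hb₀⟩ := hne
  obtain ⟨b₁, hb₁, hind₁, -⟩ := exists_mem_nonnegCoeffs_linearIndepOn_support hx c hb₀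
  obtain ⟨b, ⟨hb, -⟩, hmax⟩ := Set.exists_max_image _ (c ⬝ᵥ ·)
    finite_nonnegCoeffs_linearIndepOn_support ⟨b₁, hb₁, hind₁⟩
  refine ⟨b, hb, fun b' hb' => ?_⟩
  obtain ⟨b'', hb'', hind'', hcb⟩ := exists_mem_nonnegCoeffs_linearIndepOn_support hx c hb'
  exact hcb.trans (hmax b'' ⟨hb'', hind''⟩)

theorem exists_mem_nonnegCoeffs_sum_le {κ : Type*} [Fintype κ] {a : κ → K} (ha : ∀ j, 0 < a j)
    {y : κ → E} (hy : ∀ j, ∃ m : ι → ℕ, m ≠ 0 ∧ y j = ∑ i, m i • x i)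
    (hv : ∑ j, a j • y j = v) : ∃ b ∈ nonnegCoeffs K x v, ∑ j, a j ≤ ∑ i, b i := by
  choose m hm0 hmy using hy
  refine ⟨fun i => ∑ j, a j * m j i, ⟨fun i => ?_, ?_⟩, ?_⟩
  · exact sum_nonneg fun j _ => mul_nonneg (ha j).le (Nat.cast_nonneg _)
  · simp_rw [← hv, hmy, smul_sum, sum_smul, mul_smul, Nat.cast_smul_eq_nsmul]
    exact sum_comm
  · rw [sum_comm]
    refine sum_le_sum fun j _ => ?_
    have hmj : 1 ≤ ∑ i, (m j i : K) := by
      obtain ⟨i, hi⟩ := Function.ne_iff.mp (hm0 j)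
      exact_mod_cast (Nat.one_le_iff_ne_zero.mpr hi).trans (single_le_sum (by simp) (mem_univ i))
    simpa [← mul_sum] using mul_le_mul_of_nonneg_left hmj (ha j).le

theorem PointedCone.eq_zero_of_sum_smul_eq_zero {C : PointedCone K E}
    (hC : (C : ConvexCone K E).Salient) (hxC : ∀ i, x i ∈ C) (hx0 : ∀ i, x i ≠ 0) {d : ι → K}
    (hd : 0 ≤ d) (h : ∑ i, d i • x i = 0) : d = 0 := by
  classical
  funext i
  by_contra hi
  rw [← add_sum_erase _ _ (mem_univ i)] at h
  refine hC _ (C.smul_mem (hd i) (hxC i)) (smul_ne_zero hi (hx0 i)) ?_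
  rw [neg_eq_of_add_eq_zero_right h]
  exact Submodule.sum_mem _ fun j _ => C.smul_mem (hd j) (hxC j)

theorem PointedCone.coe_hull_range (u : ι → E) : (PointedCone.hull K (Set.range u) : Set E) =
    {w | ∃ c : ι → K, (∀ i, 0 ≤ c i) ∧ w = ∑ i, c i • u i} := by
  ext w
  simp only [SetLike.mem_coe, Submodule.mem_span_range_iff_exists_fun, Set.mem_ofPred_eq]
  constructor
  · rintro ⟨c, rfl⟩
    exact ⟨fun i => c i, fun i => (c i).2, rfl⟩
  · rintro ⟨c, hc, rfl⟩
    exact ⟨fun i => ⟨c i, hc i⟩, rfl⟩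

end LinearProgram

section LatticePoints

variable {σ κ : Type*} [Fintype κ]

def castVec : (σ → ℤ) →+ (σ → ℚ) := (Int.castAddHom ℚ).compLeft σ

@[simp] theorem castVec_apply (S : σ → ℤ) (j : σ) : castVec S j = S j := rfl

theorem castVec_injective : Injective (castVec (σ := σ)) :=
  fun _ _ h => funext fun j => by simpa using congrFun h j

def latticeParallelepiped (g : κ → σ → ℤ) : Set (σ → ℤ) :=
  {h | ∃ t ∈ Set.Icc (0 : κ → ℚ) 1, castVec h = ∑ i, t i • castVec (g i)}

theorem latticeParallelepiped_finite [Fintype σ] [DecidableEq σ] (g : κ → σ → ℤ) :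
    (latticeParallelepiped g).Finite := by
  let M : σ → ℤ := fun j => ∑ i, |g i j|
  refine (Set.finite_Icc (-M) M).subset fun h ⟨t, ht, hh⟩ => ?_
  have hbound (j : σ) : |(h j : ℚ)| ≤ M j := by
    have hj : (h j : ℚ) = ∑ i, t i * g i j := by simpa using congrFun hh j
    rw [hj]
    push_cast [M]
    refine (abs_sum_le_sum_abs _ _).trans (sum_le_sum fun i _ => ?_)
    rw [abs_mul, abs_of_nonneg (ht.1 i)]
    exact mul_le_of_le_one_left (abs_nonneg _) (ht.2 i)
  have hbound' (j : σ) : |h j| ≤ M j := by exact_mod_cast hbound j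
  exact ⟨fun j => (abs_le.mp (hbound' j)).1, fun j => (abs_le.mp (hbound' j)).2⟩

theorem apply_mem_latticeParallelepiped (g : κ → σ → ℤ) (i : κ) :
    g i ∈ latticeParallelepiped g := by
  classical
  refine ⟨Pi.single i 1, ⟨fun j => ?_, fun j => ?_⟩, by simp [Pi.single_apply]⟩ <;>
    by_cases hj : j = i <;> simp [hj]

theorem castVec_mem_hull_of_mem_latticeParallelepiped {g : κ → σ → ℤ} {h : σ → ℤ}
    (hh : h ∈ latticeParallelepiped g) :
    castVec h ∈ PointedCone.hull ℚ (Set.range (castVec ∘ g)) := by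
  obtain ⟨t, ht, hh⟩ := hh
  rw [hh]
  exact Submodule.sum_mem _ fun i _ =>
    PointedCone.smul_mem _ (ht.1 i) (PointedCone.subset_hull ⟨i, rfl⟩)

theorem mem_closure_latticeParallelepiped {g : κ → σ → ℤ} {S : σ → ℤ}
    (hS : castVec S ∈ PointedCone.hull ℚ (Set.range (castVec ∘ g))) :
    S ∈ AddSubmonoid.closure (latticeParallelepiped g) := by
  obtain ⟨c, hc⟩ := (Submodule.mem_span_range_iff_exists_fun _).mp hS
  let q : κ → ℕ := fun i => ⌊(c i : ℚ)⌋₊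
  have hrem : S - ∑ i, q i • g i ∈ latticeParallelepiped g := by
    refine ⟨fun i => c i - q i, ⟨fun i => ?_, fun i => ?_⟩, ?_⟩
    · exact sub_nonneg.mpr (Nat.floor_le (c i).2)
    · exact sub_le_iff_le_add'.mpr (Nat.lt_floor_add_one (c i : ℚ)).le
    · simp_rw [map_sub, map_sum, map_nsmul, ← hc, sub_smul, sum_sub_distrib, Nonneg.coe_smul]
      simp [Nat.cast_smul_eq_nsmul]
  rw [← sub_add_cancel S (∑ i, q i • g i)]
  exact add_mem (AddSubmonoid.subset_closure hrem) (sum_mem fun i _ =>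
    nsmul_mem (AddSubmonoid.subset_closure (apply_mem_latticeParallelepiped g i)) _)

theorem exists_nsmul_sum_eq_of_mem_hull {g : κ → σ → ℤ}
    [Fintype ↑(latticeParallelepiped g \ {0})] {S : σ → ℤ} (hS0 : S ≠ 0)
    (hS : castVec S ∈ PointedCone.hull ℚ (Set.range (castVec ∘ g))) :
    ∃ m : ↑(latticeParallelepiped g \ {0}) → ℕ, m ≠ 0 ∧ castVec S = ∑ h, m h • castVec h.1 := by
  have hS' := mem_closure_latticeParallelepiped hS
  rw [← AddSubmonoid.closure_sdiff_singleton_zero, AddSubmonoid.mem_closure_iff_of_fintype] at hS'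
  obtain ⟨m, rfl⟩ := hS'
  refine ⟨m, ?_, by simp only [map_sum, map_nsmul]⟩
  rintro rfl
  simp at hS0

end LatticePoints

section TotalIndex

variable {σ : Type*}

def totalIndexSet (C : Set (σ → ℚ)) (v : σ → ℤ) : Set ℚ :=
  {s | ∃ k : ℕ, 1 ≤ k ∧ ∃ (a : Fin k → ℚ) (S : Fin k → σ → ℤ),
    (∀ i, 0 < a i) ∧ (∀ i, S i ≠ 0) ∧ (∀ i, castVec (S i) ∈ C) ∧
    ∑ i, a i • castVec (S i) = castVec v ∧ s = ∑ i, a i}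

theorem sum_mem_totalIndexSet {C : Set (σ → ℚ)} {v : σ → ℤ} {ι : Type*} [Fintype ι] [Nonempty ι]
    {a : ι → ℚ} (ha : ∀ i, 0 < a i) {S : ι → σ → ℤ} (hS0 : ∀ i, S i ≠ 0)
    (hSC : ∀ i, castVec (S i) ∈ C) (hv : ∑ i, a i • castVec (S i) = castVec v) :
    ∑ i, a i ∈ totalIndexSet C v := by
  let e := (Fintype.equivFin ι).symm
  exact ⟨Fintype.card ι, Fintype.card_pos, a ∘ e, S ∘ e, fun i => ha _, fun i => hS0 _,
    fun i => hSC _, (e.sum_comp fun i => a i • castVec (S i)).trans hv, (e.sum_comp a).symm⟩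

theorem sum_mem_totalIndexSet_of_mem_nonnegCoeffs {C : Set (σ → ℚ)} {v : σ → ℤ} (hv : v ≠ 0)
    {ι : Type*} [Fintype ι] {S : ι → σ → ℤ} (hS0 : ∀ i, S i ≠ 0) (hSC : ∀ i, castVec (S i) ∈ C)
    {b : ι → ℚ} (hb : b ∈ nonnegCoeffs ℚ (castVec ∘ S) (castVec v)) :
    ∑ i, b i ∈ totalIndexSet C v := by
  classical
  let s := univ.filter (b · ≠ 0)
  have hvsum : ∑ i : s, b i • castVec (S i) = castVec v := by
    rw [sum_coe_sort s fun i => b i • castVec (S i),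
      sum_filter_of_ne fun i _ => left_ne_zero_of_smul]
    exact hb.2
  have : Nonempty s := by
    by_contra h
    rw [not_nonempty_iff] at h
    exact hv (castVec_injective (by simpa using hvsum.symm))
  rw [← sum_filter_ne_zero, ← sum_coe_sort]
  exact sum_mem_totalIndexSet (fun i => (hb.1 i).lt_of_ne' (mem_filter.mp i.2).2) (fun i => hS0 i)
    (fun i => hSC i) hvsum

end TotalIndex

/-- Let `g₁,…,g_m ∈ ℤⁿ` generate the rational polyhedral cone
`C = {Σ cᵢ gᵢ : cᵢ ∈ ℚ, cᵢ ≥ 0} ⊆ ℚⁿ`, and assume `C` is pointed, i.e.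
`C ∩ (−C) = {0}`. Let `v ∈ C ∩ ℤⁿ` with `v ≠ 0`. Then the set
`A = {Σ aᵢ : k ≥ 1, aᵢ ∈ ℚ_{>0}, Sᵢ ∈ C ∩ ℤⁿ ∖ {0}, Σ aᵢ Sᵢ = v}` is nonempty and
bounded above, and its supremum is attained: `A` has a greatest element. -/
theorem totalIndex_sup_attained (n m : ℕ) (g : Fin m → Fin n → ℤ)
    (C : Set (Fin n → ℚ))
    (hC : C = {w | ∃ c : Fin m → ℚ, (∀ i, 0 ≤ c i) ∧
      w = ∑ i, c i • (fun j => ((g i j : ℚ)))})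
    (hpointed : C ∩ (-C) = {0})
    (v : Fin n → ℤ) (hv : v ≠ 0) (hvC : (fun j => ((v j : ℚ))) ∈ C)
    (A : Set ℚ)
    (hA : A = {s | ∃ k : ℕ, 1 ≤ k ∧ ∃ (a : Fin k → ℚ) (S : Fin k → Fin n → ℤ),
      (∀ i, 0 < a i) ∧ (∀ i, S i ≠ 0) ∧
      (∀ i, (fun j => ((S i j : ℚ))) ∈ C) ∧
      (∑ i, a i • (fun j => ((S i j : ℚ)))) = (fun j => ((v j : ℚ))) ∧
      s = ∑ i, a i}) :
    A.Nonempty ∧ BddAbove A ∧ ∃ t, IsGreatest A t := by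
  let P := PointedCone.hull ℚ (Set.range (castVec ∘ g))
  have hCP : C = P := hC.trans (PointedCone.coe_hull_range _).symm
  replace hA : A = totalIndexSet C v := hA
  subst hA hCP
  let H := latticeParallelepiped g \ {0}
  have : Fintype H := (latticeParallelepiped_finite g).sdiff.fintype
  have hHP (h : H) : castVec h.1 ∈ P := castVec_mem_hull_of_mem_latticeParallelepiped h.2.1
  have hindep : ∀ d : H → ℚ, 0 ≤ d → ∑ h, d h • castVec h.1 = 0 → d = 0 := fun d =>
    PointedCone.eq_zero_of_sum_smul_eq_zero ((P.salient_iff_inter_neg_eq_singleton).mpr hpointed)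
      hHP (fun h => (map_ne_zero_iff _ castVec_injective).mpr h.2.2)
  have hle : ∀ s ∈ totalIndexSet P v,
      ∃ b ∈ nonnegCoeffs ℚ (fun h : H => castVec h.1) (castVec v), s ≤ 1 ⬝ᵥ b := by
    rintro s ⟨k, -, a, S, ha, hS0, hSP, hsum, rfl⟩
    simpa [one_dotProduct] using exists_mem_nonnegCoeffs_sum_le ha
      (fun j => exists_nsmul_sum_eq_of_mem_hull (hS0 j) (hSP j)) hsum
  obtain ⟨b₀, hb₀, -⟩ := hle 1 (by
    simpa using sum_mem_totalIndexSet (ι := Unit) (fun _ => one_pos) (fun _ => hv) (fun _ => hvC)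
      (by simp))
  obtain ⟨b, hb, hmax⟩ := exists_isMaxOn_nonnegCoeffs hindep 1 ⟨b₀, hb₀⟩
  have hgreatest : IsGreatest (totalIndexSet P v) (1 ⬝ᵥ b) := by
    refine ⟨?_, fun s hs => ?_⟩
    · simpa [one_dotProduct] using
        sum_mem_totalIndexSet_of_mem_nonnegCoeffs hv (fun h : H => h.2.2) hHP hb
    · obtain ⟨b', hb', hsb'⟩ := hle s hs
      exact hsb'.trans (hmax hb')
  exact ⟨hgreatest.nonempty, hgreatest.bddAbove, _, hgreatest⟩
end

section
/- With the Voskresenskij–Klyachko data: g₁ + g₂ + g₃ + g₄ + g₅ = 2v in ℤ⁶. Consequently there exist k ≥ 1, positive rationals a₁,…,a_k, and nonzero lattice points S₁,…,S_k ∈ C ∩ ℤ⁶ with Σᵢ aᵢ Sᵢ = v and Σᵢ aᵢ = 5/2 (namely k = 5, aᵢ = 1/2, Sᵢ = gᵢ). Hence the ℚ-total index of the Voskresenskij–Klyachko fourfold satisfies τ_X(ℚ) ≥ 5/2. -/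
/-- The vectors `g₀,…,g₅`: `g₀ = (2,−1,−1,−1,−1,−1)` and `g_ℓ = g₀ − e_{ℓ+1}`. -/
def vkG : Fin 6 → Fin 6 → ℤ :=
  ![![2, -1, -1, -1, -1, -1],
    ![2, -2, -1, -1, -1, -1],
    ![2, -1, -2, -1, -1, -1],
    ![2, -1, -1, -2, -1, -1],
    ![2, -1, -1, -1, -2, -1],
    ![2, -1, -1, -1, -1, -2]]

/-- The vectors `h₀,…,h₅`: `h₀ = (3,−2,−2,−2,−2,−2)` and `h_ℓ = h₀ + e_{ℓ+1}`. -/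
def vkH : Fin 6 → Fin 6 → ℤ :=
  ![![3, -2, -2, -2, -2, -2],
    ![3, -1, -2, -2, -2, -2],
    ![3, -2, -1, -2, -2, -2],
    ![3, -2, -2, -1, -2, -2],
    ![3, -2, -2, -2, -1, -2],
    ![3, -2, -2, -2, -2, -1]]

/-- The anticanonical class `v = −K_X = (5,−3,−3,−3,−3,−3)`. -/
def vkV : Fin 6 → ℤ := ![5, -3, -3, -3, -3, -3]

/-- Coercion `ℤ⁶ → ℚ⁶`. -/
def toQ (x : Fin 6 → ℤ) : Fin 6 → ℚ := fun i => (x i : ℚ)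

/-- The 12 generators `g₀,…,g₅,h₀,…,h₅` of the nef cone. -/
def vkGen : Fin 12 → Fin 6 → ℤ := Fin.append vkG vkH

/-- The nef cone `C = {Σ_{g∈G} c_g g : c_g ∈ ℚ, c_g ≥ 0} ⊆ ℚ⁶`. -/
def vkC : Set (Fin 6 → ℚ) :=
  {w | ∃ c : Fin 12 → ℚ, (∀ i, 0 ≤ c i) ∧ w = ∑ i, c i • toQ (vkGen i)}


/-- With the Voskresenskij–Klyachko data, `g₁+g₂+g₃+g₄+g₅ = 2v`
in `ℤ⁶`; consequently there exist `k ≥ 1`, positive rationals `a₁,…,a_k`, and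
nonzero lattice points `S₁,…,S_k ∈ C ∩ ℤ⁶` with `Σ aᵢ Sᵢ = v` and `Σ aᵢ = 5/2`
(namely `k = 5`, `aᵢ = 1/2`, `Sᵢ = gᵢ`). Hence `τ_X(ℚ) ≥ 5/2`. -/
theorem vk_rational_partition_five_halves :
    (vkG 1 + vkG 2 + vkG 3 + vkG 4 + vkG 5 = 2 • vkV) ∧
    ∃ k : ℕ, 1 ≤ k ∧ ∃ (a : Fin k → ℚ) (S : Fin k → Fin 6 → ℤ),
      (∀ i, 0 < a i) ∧ (∀ i, S i ≠ 0) ∧ (∀ i, toQ (S i) ∈ vkC) ∧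
      (∑ i, a i • toQ (S i)) = toQ vkV ∧ (∑ i, a i) = 5 / 2 := by
  constructor
  · decide
  · refine ⟨5, by norm_num, fun _ => 1/2, fun i => vkG i.succ, fun i => by norm_num,
      fun i => ?_, fun i => ?_, ?_, ?_⟩
    · intro h
      have := congrFun h 0
      fin_cases i <;> exact absurd this (by decide)
    · refine ⟨fun j => if j = Fin.castAdd 6 i.succ then 1 else 0, fun j => by positivity, ?_⟩
      have : ∑ j : Fin 12, (if j = Fin.castAdd 6 i.succ then (1:ℚ) else 0) • toQ (vkGen j)
          = toQ (vkGen (Fin.castAdd 6 i.succ)) := by simp [ite_smul]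
      rw [this, vkGen, Fin.append_left]
    · have key : vkG 1 + vkG 2 + vkG 3 + vkG 4 + vkG 5 = 2 • vkV := by decide
      have hQ : ∀ x y : Fin 6 → ℤ, toQ (x + y) = toQ x + toQ y :=
        fun x y => funext fun j => by simp [toQ]
      have h2 : toQ (2 • vkV) = 2 • toQ vkV := funext fun j => by simp [toQ]
      rw [Fin.sum_univ_five, ← smul_add, ← smul_add, ← smul_add, ← smul_add,
        ← hQ, ← hQ, ← hQ, ← hQ]
      simp only [show (0:Fin 5).succ = 1 from rfl, show (1:Fin 5).succ = 2 from rfl,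
        show (2:Fin 5).succ = 3 from rfl, show (3:Fin 5).succ = 4 from rfl,
        show (4:Fin 5).succ = 5 from rfl]
      rw [key, h2]
      module
    · simp [Fin.sum_univ_five]; norm_num
end

section
/- With the Voskresenskij–Klyachko data: the set {x ∈ ℤ⁶ : x ≠ 0, x ∈ C, and v − x ∈ C} is exactly G ∪ {v}, a set of 13 lattice points. (This set is P_X = Nef(X) ∩ (−K_X − Nef(X)) ∩ Pic(X) ∖ {0}, the set of possible parts of a ℤ-nef-partition of −K_X.) -/
/-- The 20 facet normals of the nef cone. -/
def vkDual : Fin 20 → Fin 6 → ℤ :=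
  ![![-1, -1, -1, 0, 0, 0],
    ![-1, -1, 0, -1, 0, 0],
    ![-1, -1, 0, 0, -1, 0],
    ![-1, -1, 0, 0, 0, -1],
    ![-1, 0, -1, -1, 0, 0],
    ![-1, 0, -1, 0, -1, 0],
    ![-1, 0, -1, 0, 0, -1],
    ![-1, 0, 0, -1, -1, 0],
    ![-1, 0, 0, -1, 0, -1],
    ![-1, 0, 0, 0, -1, -1],
    ![2, 0, 0, 1, 1, 1],
    ![2, 0, 1, 0, 1, 1],
    ![2, 0, 1, 1, 0, 1],
    ![2, 0, 1, 1, 1, 0],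
    ![2, 1, 0, 0, 1, 1],
    ![2, 1, 0, 1, 0, 1],
    ![2, 1, 0, 1, 1, 0],
    ![2, 1, 1, 0, 0, 1],
    ![2, 1, 1, 0, 1, 0],
    ![2, 1, 1, 1, 0, 0]]

lemma vkDual_gen_nonneg : ∀ (j : Fin 20) (k : Fin 12),
    (0 : ℤ) ≤ ∑ i, vkDual j i * vkGen k i := by decide

lemma vkDual_v : ∀ j : Fin 20, ∑ i, vkDual j i * vkV i = 1 := by decide

lemma dot_nonneg (x : Fin 6 → ℤ) (hx : toQ x ∈ vkC) (j : Fin 20) :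
    0 ≤ ∑ i, vkDual j i * x i := by
  obtain ⟨c, hc, he⟩ := hx
  have hxi : ∀ i, (x i : ℚ) = ∑ k, c k * (vkGen k i : ℚ) := by
    intro i
    have := congrFun he i
    simpa [toQ, Finset.sum_apply, Pi.smul_apply, smul_eq_mul] using this
  have key : ((∑ i, vkDual j i * x i : ℤ) : ℚ)
      = ∑ k, c k * ((∑ i, vkDual j i * vkGen k i : ℤ) : ℚ) := by
    push_cast
    simp_rw [hxi, Finset.mul_sum]
    rw [Finset.sum_comm]
    refine Finset.sum_congr rfl fun k _ => ?_
    exact Finset.sum_congr rfl fun i _ => by ring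
  have h2 : (0:ℚ) ≤ ∑ k, c k * ((∑ i, vkDual j i * vkGen k i : ℤ) : ℚ) :=
    Finset.sum_nonneg fun k _ =>
      mul_nonneg (hc k) (by exact_mod_cast vkDual_gen_nonneg j k)
  exact_mod_cast key ▸ h2

lemma eq_vec {x : Fin 6 → ℤ} {a b c d e f : ℤ}
    (h0 : x 0 = a) (h1 : x 1 = b) (h2 : x 2 = c) (h3 : x 3 = d)
    (h4 : x 4 = e) (h5 : x 5 = f) :
    x = ![a, b, c, d, e, f] := by
  funext i
  fin_cases i <;> simpa

lemma gen_mem (k : Fin 12) : toQ (vkGen k) ∈ vkC := by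
  refine ⟨fun i => if i = k then 1 else 0, fun i => by dsimp only; split <;> norm_num, ?_⟩
  simp [ite_smul]

lemma add_mem' {a b : Fin 6 → ℚ} (ha : a ∈ vkC) (hb : b ∈ vkC) : a + b ∈ vkC := by
  obtain ⟨c, hc, he⟩ := ha
  obtain ⟨d, hd, hf⟩ := hb
  exact ⟨c + d, fun i => add_nonneg (hc i) (hd i), by
    simp [he, hf, add_smul, Finset.sum_add_distrib]⟩

lemma zero_mem' : (0 : Fin 6 → ℚ) ∈ vkC :=
  ⟨0, fun i => le_refl 0, by simp⟩

lemma toQ_eq (a b : Fin 6 → ℤ) (h : a = b) : toQ a = toQ b := by rw [h]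

set_option maxHeartbeats 2000000 in
/-- With the Voskresenskij–Klyachko data, the set
`{x ∈ ℤ⁶ : x ≠ 0, x ∈ C, v − x ∈ C}` is exactly `G ∪ {v}`, a set of 13 lattice
points. (This is `P_X = Nef(X) ∩ (−K_X − Nef(X)) ∩ Pic(X) ∖ {0}`.) -/
theorem vk_possible_parts :
    ({x : Fin 6 → ℤ | x ≠ 0 ∧ toQ x ∈ vkC ∧ toQ (vkV - x) ∈ vkC}
      = (Set.range vkG ∪ Set.range vkH) ∪ {vkV}) ∧
    ((Set.range vkG ∪ Set.range vkH) ∪ {vkV}).ncard = 13 := by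
  constructor
  · ext x
    simp only [Set.mem_setOf_eq, Set.mem_union, Set.mem_range, Set.mem_singleton_iff]
    constructor
    · rintro ⟨hne, hx, hvx⟩
      have h1 := dot_nonneg x hx
      have h2 : ∀ j, ∑ i, vkDual j i * x i ≤ 1 := by
        intro j
        have hv := vkDual_v j
        have := dot_nonneg _ hvx j
        simp only [Pi.sub_apply, mul_sub, Finset.sum_sub_distrib, hv] at this
        omega
      have e0l := h1 0; have e0r := h2 0
      have e1l := h1 1; have e1r := h2 1
      have e2l := h1 2; have e2r := h2 2
      have e3l := h1 3; have e3r := h2 3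
      have e4l := h1 4; have e4r := h2 4
      have e5l := h1 5; have e5r := h2 5
      have e6l := h1 6; have e6r := h2 6
      have e7l := h1 7; have e7r := h2 7
      have e8l := h1 8; have e8r := h2 8
      have e9l := h1 9; have e9r := h2 9
      have e10l := h1 10; have e10r := h2 10
      have e11l := h1 11; have e11r := h2 11
      have e12l := h1 12; have e12r := h2 12
      have e13l := h1 13; have e13r := h2 13
      have e14l := h1 14; have e14r := h2 14
      have e15l := h1 15; have e15r := h2 15
      have e16l := h1 16; have e16r := h2 16
      have e17l := h1 17; have e17r := h2 17
      have e18l := h1 18; have e18r := h2 18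
      have e19l := h1 19; have e19r := h2 19
      rw [Fin.sum_univ_six] at e0l e0r e1l e1r e2l e2r e3l e3r e4l e4r e5l e5r e6l e6r e7l e7r e8l e8r e9l e9r e10l e10r e11l e11r e12l e12r e13l e13r e14l e14r e15l e15r e16l e16r e17l e17r e18l e18r e19l e19r
      simp only [show vkDual 0 0 = -1 from rfl,
        show vkDual 0 1 = -1 from rfl,
        show vkDual 0 2 = -1 from rfl,
        show vkDual 0 3 = 0 from rfl,
        show vkDual 0 4 = 0 from rfl,
        show vkDual 0 5 = 0 from rfl,
        show vkDual 1 0 = -1 from rfl,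
        show vkDual 1 1 = -1 from rfl,
        show vkDual 1 2 = 0 from rfl,
        show vkDual 1 3 = -1 from rfl,
        show vkDual 1 4 = 0 from rfl,
        show vkDual 1 5 = 0 from rfl,
        show vkDual 2 0 = -1 from rfl,
        show vkDual 2 1 = -1 from rfl,
        show vkDual 2 2 = 0 from rfl,
        show vkDual 2 3 = 0 from rfl,
        show vkDual 2 4 = -1 from rfl,
        show vkDual 2 5 = 0 from rfl,
        show vkDual 3 0 = -1 from rfl,
        show vkDual 3 1 = -1 from rfl,
        show vkDual 3 2 = 0 from rfl,
        show vkDual 3 3 = 0 from rfl,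
        show vkDual 3 4 = 0 from rfl,
        show vkDual 3 5 = -1 from rfl,
        show vkDual 4 0 = -1 from rfl,
        show vkDual 4 1 = 0 from rfl,
        show vkDual 4 2 = -1 from rfl,
        show vkDual 4 3 = -1 from rfl,
        show vkDual 4 4 = 0 from rfl,
        show vkDual 4 5 = 0 from rfl,
        show vkDual 5 0 = -1 from rfl,
        show vkDual 5 1 = 0 from rfl,
        show vkDual 5 2 = -1 from rfl,
        show vkDual 5 3 = 0 from rfl,
        show vkDual 5 4 = -1 from rfl,
        show vkDual 5 5 = 0 from rfl,
        show vkDual 6 0 = -1 from rfl,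
        show vkDual 6 1 = 0 from rfl,
        show vkDual 6 2 = -1 from rfl,
        show vkDual 6 3 = 0 from rfl,
        show vkDual 6 4 = 0 from rfl,
        show vkDual 6 5 = -1 from rfl,
        show vkDual 7 0 = -1 from rfl,
        show vkDual 7 1 = 0 from rfl,
        show vkDual 7 2 = 0 from rfl,
        show vkDual 7 3 = -1 from rfl,
        show vkDual 7 4 = -1 from rfl,
        show vkDual 7 5 = 0 from rfl,
        show vkDual 8 0 = -1 from rfl,
        show vkDual 8 1 = 0 from rfl,
        show vkDual 8 2 = 0 from rfl,
        show vkDual 8 3 = -1 from rfl,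
        show vkDual 8 4 = 0 from rfl,
        show vkDual 8 5 = -1 from rfl,
        show vkDual 9 0 = -1 from rfl,
        show vkDual 9 1 = 0 from rfl,
        show vkDual 9 2 = 0 from rfl,
        show vkDual 9 3 = 0 from rfl,
        show vkDual 9 4 = -1 from rfl,
        show vkDual 9 5 = -1 from rfl,
        show vkDual 10 0 = 2 from rfl,
        show vkDual 10 1 = 0 from rfl,
        show vkDual 10 2 = 0 from rfl,
        show vkDual 10 3 = 1 from rfl,
        show vkDual 10 4 = 1 from rfl,
        show vkDual 10 5 = 1 from rfl,
        show vkDual 11 0 = 2 from rfl,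
        show vkDual 11 1 = 0 from rfl,
        show vkDual 11 2 = 1 from rfl,
        show vkDual 11 3 = 0 from rfl,
        show vkDual 11 4 = 1 from rfl,
        show vkDual 11 5 = 1 from rfl,
        show vkDual 12 0 = 2 from rfl,
        show vkDual 12 1 = 0 from rfl,
        show vkDual 12 2 = 1 from rfl,
        show vkDual 12 3 = 1 from rfl,
        show vkDual 12 4 = 0 from rfl,
        show vkDual 12 5 = 1 from rfl,
        show vkDual 13 0 = 2 from rfl,
        show vkDual 13 1 = 0 from rfl,
        show vkDual 13 2 = 1 from rfl,
        show vkDual 13 3 = 1 from rfl,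
        show vkDual 13 4 = 1 from rfl,
        show vkDual 13 5 = 0 from rfl,
        show vkDual 14 0 = 2 from rfl,
        show vkDual 14 1 = 1 from rfl,
        show vkDual 14 2 = 0 from rfl,
        show vkDual 14 3 = 0 from rfl,
        show vkDual 14 4 = 1 from rfl,
        show vkDual 14 5 = 1 from rfl,
        show vkDual 15 0 = 2 from rfl,
        show vkDual 15 1 = 1 from rfl,
        show vkDual 15 2 = 0 from rfl,
        show vkDual 15 3 = 1 from rfl,
        show vkDual 15 4 = 0 from rfl,
        show vkDual 15 5 = 1 from rfl,
        show vkDual 16 0 = 2 from rfl,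
        show vkDual 16 1 = 1 from rfl,
        show vkDual 16 2 = 0 from rfl,
        show vkDual 16 3 = 1 from rfl,
        show vkDual 16 4 = 1 from rfl,
        show vkDual 16 5 = 0 from rfl,
        show vkDual 17 0 = 2 from rfl,
        show vkDual 17 1 = 1 from rfl,
        show vkDual 17 2 = 1 from rfl,
        show vkDual 17 3 = 0 from rfl,
        show vkDual 17 4 = 0 from rfl,
        show vkDual 17 5 = 1 from rfl,
        show vkDual 18 0 = 2 from rfl,
        show vkDual 18 1 = 1 from rfl,
        show vkDual 18 2 = 1 from rfl,
        show vkDual 18 3 = 0 from rfl,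
        show vkDual 18 4 = 1 from rfl,
        show vkDual 18 5 = 0 from rfl,
        show vkDual 19 0 = 2 from rfl,
        show vkDual 19 1 = 1 from rfl,
        show vkDual 19 2 = 1 from rfl,
        show vkDual 19 3 = 1 from rfl,
        show vkDual 19 4 = 0 from rfl,
        show vkDual 19 5 = 0 from rfl] at e0l e0r e1l e1r e2l e2r e3l e3r e4l e4r e5l e5r e6l e6r e7l e7r e8l e8r e9l e9r e10l e10r e11l e11r e12l e12r e13l e13r e14l e14r e15l e15r e16l e16r e17l e17r e18l e18r e19l e19r

      have hx0 : x 0 = 0 ∨ x 0 = 2 ∨ x 0 = 3 ∨ x 0 = 5 := by omega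
      rcases hx0 with a0|a0|a0|a0
      · have a1 : x 1 = 0 := by omega
        have a2 : x 2 = 0 := by omega
        have a3 : x 3 = 0 := by omega
        have a4 : x 4 = 0 := by omega
        have a5 : x 5 = 0 := by omega
        exact absurd ((eq_vec a0 a1 a2 a3 a4 a5).trans
          (by funext i; fin_cases i <;> rfl)) hne
      · have b1 : x 1 = -1 ∨ x 1 = -2 := by omega
        have b2 : x 2 = -1 ∨ x 2 = -2 := by omega
        have b3 : x 3 = -1 ∨ x 3 = -2 := by omega
        have b4 : x 4 = -1 ∨ x 4 = -2 := by omega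
        have b5 : x 5 = -1 ∨ x 5 = -2 := by omega
        rcases b1 with a1|a1 <;> rcases b2 with a2|a2 <;> rcases b3 with a3|a3 <;>
          rcases b4 with a4|a4 <;> rcases b5 with a5|a5 <;>
          first
            | exact Or.inl (Or.inl ⟨0, (eq_vec a0 a1 a2 a3 a4 a5).symm⟩)
            | exact Or.inl (Or.inl ⟨1, (eq_vec a0 a1 a2 a3 a4 a5).symm⟩)
            | exact Or.inl (Or.inl ⟨2, (eq_vec a0 a1 a2 a3 a4 a5).symm⟩)
            | exact Or.inl (Or.inl ⟨3, (eq_vec a0 a1 a2 a3 a4 a5).symm⟩)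
            | exact Or.inl (Or.inl ⟨4, (eq_vec a0 a1 a2 a3 a4 a5).symm⟩)
            | exact Or.inl (Or.inl ⟨5, (eq_vec a0 a1 a2 a3 a4 a5).symm⟩)
            | (exfalso; omega)
      · have b1 : x 1 = -1 ∨ x 1 = -2 := by omega
        have b2 : x 2 = -1 ∨ x 2 = -2 := by omega
        have b3 : x 3 = -1 ∨ x 3 = -2 := by omega
        have b4 : x 4 = -1 ∨ x 4 = -2 := by omega
        have b5 : x 5 = -1 ∨ x 5 = -2 := by omega
        rcases b1 with a1|a1 <;> rcases b2 with a2|a2 <;> rcases b3 with a3|a3 <;>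
          rcases b4 with a4|a4 <;> rcases b5 with a5|a5 <;>
          first
            | exact Or.inl (Or.inr ⟨0, (eq_vec a0 a1 a2 a3 a4 a5).symm⟩)
            | exact Or.inl (Or.inr ⟨1, (eq_vec a0 a1 a2 a3 a4 a5).symm⟩)
            | exact Or.inl (Or.inr ⟨2, (eq_vec a0 a1 a2 a3 a4 a5).symm⟩)
            | exact Or.inl (Or.inr ⟨3, (eq_vec a0 a1 a2 a3 a4 a5).symm⟩)
            | exact Or.inl (Or.inr ⟨4, (eq_vec a0 a1 a2 a3 a4 a5).symm⟩)
            | exact Or.inl (Or.inr ⟨5, (eq_vec a0 a1 a2 a3 a4 a5).symm⟩)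
            | (exfalso; omega)
      · have a1 : x 1 = -3 := by omega
        have a2 : x 2 = -3 := by omega
        have a3 : x 3 = -3 := by omega
        have a4 : x 4 = -3 := by omega
        have a5 : x 5 = -3 := by omega
        exact Or.inr (eq_vec a0 a1 a2 a3 a4 a5)
    · -- reverse inclusion
      have hGgen : ∀ k : Fin 6, vkG k = vkGen (Fin.castAdd 6 k) := by
        intro k; rw [vkGen, Fin.append_left]
      have hHgen : ∀ k : Fin 6, vkH k = vkGen (Fin.natAdd 6 k) := by
        intro k; rw [vkGen, Fin.append_right]
      have hGne : ∀ k : Fin 6, vkG k ≠ 0 := by decide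
      have hHne : ∀ k : Fin 6, vkH k ≠ 0 := by decide
      have hVne : vkV ≠ 0 := by decide
      have hVGH : ∀ k : Fin 6, vkV - vkG k = vkH k := by decide
      have hVHG : ∀ k : Fin 6, vkV - vkH k = vkG k := by decide
      rintro ((⟨k, rfl⟩ | ⟨k, rfl⟩) | rfl)
      · exact ⟨hGne k, by rw [hGgen k]; exact gen_mem _,
          by rw [toQ_eq _ _ (hVGH k), hHgen k]; exact gen_mem _⟩
      · exact ⟨hHne k, by rw [hHgen k]; exact gen_mem _,
          by rw [toQ_eq _ _ (hVHG k), hGgen k]; exact gen_mem _⟩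
      · refine ⟨hVne, ?_, ?_⟩
        · have hv : vkV = vkGen 0 + vkGen 6 := by decide
          have : toQ vkV = toQ (vkGen 0) + toQ (vkGen 6) := by
            rw [hv]; funext i; simp [toQ]
          rw [this]
          exact add_mem' (gen_mem 0) (gen_mem 6)
        · have : toQ (vkV - vkV) = 0 := by funext i; simp [toQ]
          rw [this]; exact zero_mem'
  · have hset : (Set.range vkG ∪ Set.range vkH) ∪ {vkV}
        = ↑((Finset.univ.image vkG ∪ Finset.univ.image vkH) ∪ {vkV}) := by
      simp
    rw [hset, Set.ncard_coe_finset]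
    decide
end
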